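/- In the DSG method, assuming the saddle-point assumption, G(z⁽ᵏ⁾) ≠ 0 for all k, and that the chosen subgradient selections g₀, g₁, …, g_m are bounded in norm on every compact subset of ℝⁿ, there exists a constant C > 0 such that ‖G(z⁽ᵏ⁾)‖₂ ≤ C for all k ∈ ℕ. -/

import Mathlib

/-!
The iterates of the DSG method never leave a fixed ball around the saddle point z*, and G is
bounded on bounded sets because the subgradient selections are bounded on compact sets.

For the first claim, the saddle-point and subgradient inequalities give
⟨G(z), z - z*⟩ ≥ L(x, λ*, ν*) - L(x*, λ, ν) ≥ 0 as long as λ ≥ 0, and λ⁽ᵏ⁾ ≥ 0 holds along the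
method because s⁽ᵏ⁾ only accumulates -F ≤ 0 in its λ-block. Since s⁽ᵏ⁾ = β_{k-1} (z⁽⁰⁾ - z⁽ᵏ⁾),
z⁽ᵏ⁺¹⁾ - z* is a convex combination of z⁽⁰⁾ - z* and z⁽ᵏ⁾ - z* minus u/β_k, with u the normalised
G(z⁽ᵏ⁾). The weight 1 - β_{k-1}/β_k = 1/(β_{k-1} β_k) on z⁽⁰⁾ - z* dominates 1/β_k², and together
with ⟨u, z⁽ᵏ⁾ - z*⟩ ≥ 0 this keeps z⁽ᵏ⁾ in the ball of radius ‖z⁽⁰⁾ - z*‖ + 1 about z*.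
-/

open scoped RealInnerProductSpace
open Matrix

/-- `A x` for `A` an `l × n` real matrix and `x ∈ ℝⁿ`, as Euclidean spaces. -/
noncomputable def mulVecE {l n : ℕ} (A : Matrix (Fin l) (Fin n) ℝ)
    (x : EuclideanSpace ℝ (Fin n)) : EuclideanSpace ℝ (Fin l) :=
  Matrix.toEuclideanLin A x

/-- `F(x) = (max{f₁(x),0}, …, max{f_m(x),0})`. -/
noncomputable def Fplus {n m : ℕ} (f : Fin m → EuclideanSpace ℝ (Fin n) → ℝ)
    (x : EuclideanSpace ℝ (Fin n)) : EuclideanSpace ℝ (Fin m) :=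
  (WithLp.equiv 2 (Fin m → ℝ)).symm fun i => max (f i x) 0

/-- The Lagrangian `L(x, λ, ν) = f₀(x) + λᵀF(x) + νᵀ(Ax - b)`. -/
noncomputable def Lag {n m l : ℕ} (f0 : EuclideanSpace ℝ (Fin n) → ℝ)
    (f : Fin m → EuclideanSpace ℝ (Fin n) → ℝ)
    (A : Matrix (Fin l) (Fin n) ℝ) (b : EuclideanSpace ℝ (Fin l))
    (x : EuclideanSpace ℝ (Fin n)) (lam : EuclideanSpace ℝ (Fin m))
    (nu : EuclideanSpace ℝ (Fin l)) : ℝ :=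
  f0 x + ⟪lam, Fplus f x⟫ + ⟪nu, mulVecE A x - b⟫

section
variable {X Y Z : Type*} [SeminormedAddCommGroup X] [SeminormedAddCommGroup Y]
  [SeminormedAddCommGroup Z]

noncomputable def l2Triple (a : X) (b : Y) (c : Z) : WithLp 2 (X × WithLp 2 (Y × Z)) :=
  WithLp.toLp 2 (a, WithLp.toLp 2 (b, c))

lemma l2Triple_add (a a' : X) (b b' : Y) (c c' : Z) :
    l2Triple (a + a') (b + b') (c + c') = l2Triple a b c + l2Triple a' b' c' := rfl

lemma l2Triple_sub (a a' : X) (b b' : Y) (c c' : Z) :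
    l2Triple (a - a') (b - b') (c - c') = l2Triple a b c - l2Triple a' b' c' := rfl

lemma l2Triple_zero : l2Triple (0 : X) (0 : Y) (0 : Z) = 0 := rfl

lemma l2Triple_smul [NormedSpace ℝ X] [NormedSpace ℝ Y] [NormedSpace ℝ Z] (r : ℝ) (a : X)
    (b : Y) (c : Z) : l2Triple (r • a) (r • b) (r • c) = r • l2Triple a b c := rfl

lemma norm_l2Triple_sq (a : X) (b : Y) (c : Z) :
    ‖l2Triple a b c‖ ^ 2 = ‖a‖ ^ 2 + ‖b‖ ^ 2 + ‖c‖ ^ 2 := by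
  simp only [l2Triple, WithLp.prod_norm_sq_eq_of_L2, WithLp.toLp_fst, WithLp.toLp_snd]
  ring

lemma norm_l2Triple (a : X) (b : Y) (c : Z) :
    ‖l2Triple a b c‖ = √(‖a‖ ^ 2 + ‖b‖ ^ 2 + ‖c‖ ^ 2) := by
  rw [← norm_l2Triple_sq, Real.sqrt_sq (norm_nonneg _)]

lemma norm_le_norm_l2Triple (a : X) (b : Y) (c : Z) :
    ‖a‖ ≤ ‖l2Triple a b c‖ ∧ ‖b‖ ≤ ‖l2Triple a b c‖ ∧ ‖c‖ ≤ ‖l2Triple a b c‖ := by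
  simp only [← sq_le_sq₀ (norm_nonneg _) (norm_nonneg _), norm_l2Triple_sq]
  refine ⟨?_, ?_, ?_⟩ <;> nlinarith [sq_nonneg ‖a‖, sq_nonneg ‖b‖, sq_nonneg ‖c‖]

lemma norm_l2Triple_le (a : X) (b : Y) (c : Z) :
    ‖l2Triple a b c‖ ≤ ‖a‖ + ‖b‖ + ‖c‖ := by
  rw [← sq_le_sq₀ (norm_nonneg _) (by positivity), norm_l2Triple_sq]
  nlinarith [norm_nonneg a, norm_nonneg b, norm_nonneg c]

end

lemma inner_l2Triple {X Y Z : Type*} [NormedAddCommGroup X] [InnerProductSpace ℝ X]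
    [NormedAddCommGroup Y] [InnerProductSpace ℝ Y] [NormedAddCommGroup Z] [InnerProductSpace ℝ Z]
    (a a' : X) (b b' : Y) (c c' : Z) :
    ⟪l2Triple a b c, l2Triple a' b' c'⟫ = ⟪a, a'⟫ + ⟪b, b'⟫ + ⟪c, c'⟫ := by
  simp only [l2Triple, WithLp.prod_inner_apply]
  ring

section
variable {E : Type*} [NormedAddCommGroup E] [InnerProductSpace ℝ E]

lemma norm_convex_comb_sub_smul_le {w d u : E} {R τ c : ℝ} (hw : ‖w‖ ≤ R - 1) (hd : ‖d‖ ≤ R)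
    (hu : ‖u‖ ≤ 1) (hud : 0 ≤ ⟪u, d⟫) (hτ : 0 ≤ τ) (hc : 0 ≤ c) (hc1 : c ≤ 1)
    (hcτ : c ^ 2 ≤ 1 - τ) : ‖(1 - τ) • w + τ • d - c • u‖ ≤ R := by
  set v := (1 - τ) • w + τ • d
  have hR : 1 ≤ R := by linarith [norm_nonneg w]
  have hv : ‖v‖ ≤ R - (1 - τ) := by
    calc ‖v‖ ≤ (1 - τ) * ‖w‖ + τ * ‖d‖ := by
          refine (norm_add_le _ _).trans_eq ?_
          rw [norm_smul_of_nonneg (by nlinarith), norm_smul_of_nonneg hτ]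
      _ ≤ R - (1 - τ) := by nlinarith
  have hvu : -((1 - τ) * (R - 1)) ≤ ⟪v, u⟫ := by
    have hwu : -(R - 1) ≤ ⟪w, u⟫ := by
      have := (abs_real_inner_le_norm w u).trans (mul_le_of_le_one_right (norm_nonneg w) hu)
      linarith [(abs_le.mp this).1]
    have hdu : 0 ≤ τ * ⟪d, u⟫ := mul_nonneg hτ (real_inner_comm u d ▸ hud)
    simp only [v, inner_add_left, real_inner_smul_left]
    nlinarith [mul_le_mul_of_nonneg_left hwu (by nlinarith : (0 : ℝ) ≤ 1 - τ)]
  have hv2 : ‖v‖ ^ 2 ≤ (R - (1 - τ)) ^ 2 := pow_le_pow_left₀ (norm_nonneg v) hv 2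
  have hcvu : -(c * ⟪v, u⟫) ≤ (1 - τ) * (R - 1) := by
    have he : 0 ≤ (1 - τ) * (R - 1) := mul_nonneg (by nlinarith) (by linarith)
    nlinarith [mul_le_mul_of_nonneg_left hvu hc, mul_le_mul_of_nonneg_right hc1 he]
  have hcu : (c * ‖u‖) ^ 2 ≤ 1 - τ := by
    have := pow_le_pow_left₀ (by positivity) (mul_le_of_le_one_right hc hu) 2
    linarith
  rw [← sq_le_sq₀ (norm_nonneg _) (by linarith), norm_sub_sq_real, real_inner_smul_right,
    norm_smul_of_nonneg hc]
  nlinarith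

lemma one_le_of_eq_add_one_div {β : ℕ → ℝ} (hβ0 : 1 ≤ β 0)
    (hβ : ∀ k, β (k + 1) = β k + 1 / β k) (k : ℕ) : 1 ≤ β k := by
  induction k with
  | zero => exact hβ0
  | succ k ih => rw [hβ k]; linarith [one_div_pos.mpr (zero_lt_one.trans_le ih)]

theorem norm_sub_le_of_dualAveraging (zstar : E) {z s u : ℕ → E} {β : ℕ → ℝ}
    (hβ0 : 1 ≤ β 0) (hβ : ∀ k, β (k + 1) = β k + 1 / β k)
    (hs0 : s 0 = 0) (hs : ∀ k, s (k + 1) = s k + u k)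
    (hz : ∀ k, z (k + 1) = z 0 - (β k)⁻¹ • s (k + 1))
    (hu : ∀ k, ‖u k‖ ≤ 1) (hmono : ∀ k, 0 ≤ ⟪u k, z k - zstar⟫) (k : ℕ) :
    ‖z k - zstar‖ ≤ ‖z 0 - zstar‖ + 1 := by
  have hβ1 := one_le_of_eq_add_one_div hβ0 hβ
  have hβpos k : 0 < β k := zero_lt_one.trans_le (hβ1 k)
  have hsz k : s (k + 1) = β k • (z 0 - z (k + 1)) := by
    rw [hz k, sub_sub_cancel, smul_smul, mul_inv_cancel₀ (hβpos k).ne', one_smul]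
  induction k with
  | zero => linarith
  | succ k ih =>
    cases k with
    | zero =>
      have hz1 : z 1 - zstar
          = (1 - (0 : ℝ)) • (z 0 - zstar) + (0 : ℝ) • (z 0 - zstar) - (β 0)⁻¹ • u 0 := by
        rw [hz 0, hs 0, hs0]; module
      have hc1 := inv_le_one_of_one_le₀ hβ0
      rw [hz1]
      exact norm_convex_comb_sub_smul_le (R := ‖z 0 - zstar‖ + 1) (by linarith) (by linarith)
        (hu 0) (hmono 0) le_rfl (by positivity) hc1
        (by rw [sub_zero]; exact pow_le_one₀ (by positivity) hc1)
    | succ k =>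
      set c := (β (k + 1))⁻¹
      have hc : 0 ≤ c := inv_nonneg.mpr (hβpos _).le
      have hz2 : z (k + 2) - zstar
          = (1 - β k * c) • (z 0 - zstar) + (β k * c) • (z (k + 1) - zstar) - c • u (k + 1) := by
        rw [hz (k + 1), hs (k + 1), hsz k]; module
      have hcτ : c ^ 2 ≤ 1 - β k * c := by
        have := hβpos k
        simp only [c, hβ k]
        rw [← sub_nonneg]
        field_simp
        nlinarith
      rw [hz2]
      exact norm_convex_comb_sub_smul_le (by linarith) ih (hu _) (hmono _)
        (mul_nonneg (hβpos k).le hc) hc (inv_le_one_of_one_le₀ (hβ1 _)) hcτ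

end

lemma nonneg_of_dualAveraging {ι : Type*} {lam s F : ℕ → EuclideanSpace ℝ ι} {t β : ℕ → ℝ}
    (hlam0 : ∀ i, 0 ≤ lam 0 i) (hs0 : s 0 = 0) (hs : ∀ k, s (k + 1) = s k + t k • (-F k))
    (ht : ∀ k, 0 ≤ t k) (hF : ∀ k i, 0 ≤ F k i) (hβ : ∀ k, 0 ≤ β k)
    (hlam : ∀ k, lam (k + 1) = lam 0 - (β k)⁻¹ • s (k + 1)) (k : ℕ) (i : ι) : 0 ≤ lam k i := by
  have hs_nonpos k : s k i ≤ 0 := by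
    induction k with
    | zero => simp [hs0]
    | succ k ih =>
      rw [hs k]
      simp only [PiLp.add_apply, PiLp.smul_apply, PiLp.neg_apply, smul_eq_mul]
      nlinarith [mul_nonneg (ht k) (hF k i)]
  cases k with
  | zero => exact hlam0 i
  | succ k =>
    rw [hlam k]
    simp only [PiLp.sub_apply, PiLp.smul_apply, smul_eq_mul]
    nlinarith [mul_nonpos_of_nonneg_of_nonpos (inv_nonneg.mpr (hβ k)) (hs_nonpos (k + 1)), hlam0 i]

lemma EuclideanSpace.norm_le_sum_norm {ι : Type*} [Fintype ι] (v : EuclideanSpace ℝ ι) :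
    ‖v‖ ≤ ∑ i, ‖v i‖ := by
  rw [EuclideanSpace.norm_eq]
  exact Real.sqrt_le_iff.mpr
    ⟨by positivity, Finset.sum_sq_le_sq_sum_of_nonneg fun _ _ => norm_nonneg _⟩

lemma EuclideanSpace.real_inner_eq_sum_mul {ι : Type*} [Fintype ι] (v w : EuclideanSpace ℝ ι) :
    ⟪v, w⟫ = ∑ i, v i * w i := by
  simp [PiLp.inner_apply, mul_comm]

section
variable {n m l : ℕ}

lemma Fplus_apply (f : Fin m → EuclideanSpace ℝ (Fin n) → ℝ) (x : EuclideanSpace ℝ (Fin n))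
    (i : Fin m) : Fplus f x i = max (f i x) 0 := rfl

lemma mulVecE_sub (A : Matrix (Fin l) (Fin n) ℝ) (x y : EuclideanSpace ℝ (Fin n)) :
    mulVecE A (x - y) = mulVecE A x - mulVecE A y :=
  map_sub (toEuclideanLin A) x y

lemma inner_mulVecE_transpose (A : Matrix (Fin l) (Fin n) ℝ) (nu : EuclideanSpace ℝ (Fin l))
    (w : EuclideanSpace ℝ (Fin n)) : ⟪mulVecE Aᵀ nu, w⟫ = ⟪nu, mulVecE A w⟫ := by
  rw [mulVecE, mulVecE, ← conjTranspose_eq_transpose_of_trivial,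
    toEuclideanLin_conjTranspose_eq_adjoint, LinearMap.adjoint_inner_left]

lemma norm_mulVecE_le (A : Matrix (Fin l) (Fin n) ℝ) (x : EuclideanSpace ℝ (Fin n)) :
    ‖mulVecE A x‖ ≤ ‖LinearMap.toContinuousLinearMap (toEuclideanLin A)‖ * ‖x‖ :=
  (LinearMap.toContinuousLinearMap (toEuclideanLin A)).le_opNorm x

/-- The vector `G(z)` of the DSG method at `z = (x, λ, ν)`. -/
noncomputable def lagGrad (g0 : EuclideanSpace ℝ (Fin n) → EuclideanSpace ℝ (Fin n))
    (g : Fin m → EuclideanSpace ℝ (Fin n) → EuclideanSpace ℝ (Fin n))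
    (f : Fin m → EuclideanSpace ℝ (Fin n) → ℝ)
    (A : Matrix (Fin l) (Fin n) ℝ) (b : EuclideanSpace ℝ (Fin l))
    (x : EuclideanSpace ℝ (Fin n)) (lam : EuclideanSpace ℝ (Fin m))
    (nu : EuclideanSpace ℝ (Fin l)) :=
  l2Triple (g0 x + (∑ i, lam i • g i x) + mulVecE Aᵀ nu) (-Fplus f x) (-(mulVecE A x - b))

variable {f0 : EuclideanSpace ℝ (Fin n) → ℝ} {f : Fin m → EuclideanSpace ℝ (Fin n) → ℝ}
  {A : Matrix (Fin l) (Fin n) ℝ} {b : EuclideanSpace ℝ (Fin l)}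
  {g0 : EuclideanSpace ℝ (Fin n) → EuclideanSpace ℝ (Fin n)}
  {g : Fin m → EuclideanSpace ℝ (Fin n) → EuclideanSpace ℝ (Fin n)}

theorem lag_sub_lag_le_inner_lagGrad (hg0 : ∀ x y, ⟪g0 x, y - x⟫ ≤ f0 y - f0 x)
    (hg : ∀ i x y, ⟪g i x, y - x⟫ ≤ max (f i y) 0 - max (f i x) 0)
    (x : EuclideanSpace ℝ (Fin n)) (lam : EuclideanSpace ℝ (Fin m))
    (nu : EuclideanSpace ℝ (Fin l)) (hlam : ∀ i, 0 ≤ lam i) (x' : EuclideanSpace ℝ (Fin n))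
    (lam' : EuclideanSpace ℝ (Fin m)) (nu' : EuclideanSpace ℝ (Fin l)) :
    Lag f0 f A b x lam' nu' - Lag f0 f A b x' lam nu
      ≤ ⟪lagGrad g0 g f A b x lam nu, l2Triple x lam nu - l2Triple x' lam' nu'⟫ := by
  have h0 : f0 x - f0 x' ≤ ⟪g0 x, x - x'⟫ := by
    have := hg0 x x'
    rw [← neg_sub x, inner_neg_right] at this
    linarith
  have hsum : ⟪lam, Fplus f x⟫ - ⟪lam, Fplus f x'⟫ ≤ ⟪∑ i, lam i • g i x, x - x'⟫ := by
    rw [← inner_sub_right, sum_inner, EuclideanSpace.real_inner_eq_sum_mul]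
    refine Finset.sum_le_sum fun i _ => ?_
    have := hg i x x'
    rw [← neg_sub x, inner_neg_right] at this
    rw [real_inner_smul_left, PiLp.sub_apply]
    exact mul_le_mul_of_nonneg_left (by rw [Fplus_apply, Fplus_apply]; linarith) (hlam i)
  have hlam' : ⟪-Fplus f x, lam - lam'⟫ = ⟪lam', Fplus f x⟫ - ⟪lam, Fplus f x⟫ := by
    rw [inner_neg_left, inner_sub_right, real_inner_comm lam, real_inner_comm lam']; ring
  have hnu' : ⟪-(mulVecE A x - b), nu - nu'⟫
      = ⟪nu', mulVecE A x - b⟫ - ⟪nu, mulVecE A x - b⟫ := by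
    rw [inner_neg_left, inner_sub_right, real_inner_comm nu, real_inner_comm nu']; ring
  have hnu : ⟪nu, mulVecE A (x - x')⟫ = ⟪nu, mulVecE A x - b⟫ - ⟪nu, mulVecE A x' - b⟫ := by
    rw [← inner_sub_right, sub_sub_sub_cancel_right, mulVecE_sub]
  rw [lagGrad, ← l2Triple_sub, inner_l2Triple, inner_add_left, inner_add_left,
    inner_mulVecE_transpose, hlam', hnu', hnu, Lag, Lag]
  linarith

theorem exists_norm_lagGrad_le
    (hg : ∀ i x y, ⟪g i x, y - x⟫ ≤ max (f i y) 0 - max (f i x) 0)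
    (hbdd : ∀ B : Set (EuclideanSpace ℝ (Fin n)), IsCompact B →
      ∃ M : ℝ, ∀ x ∈ B, ‖g0 x‖ ≤ M ∧ ∀ i, ‖g i x‖ ≤ M) (R : ℝ) :
    ∃ C, ∀ x lam nu, ‖l2Triple x lam nu‖ ≤ R → ‖lagGrad g0 g f A b x lam nu‖ ≤ C := by
  obtain ⟨M, hM⟩ := hbdd (Metric.closedBall 0 R) (isCompact_closedBall 0 R)
  set CA := ‖LinearMap.toContinuousLinearMap (toEuclideanLin A)‖
  set CAT := ‖LinearMap.toContinuousLinearMap (toEuclideanLin Aᵀ)‖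
  refine ⟨M + m * (R * M) + CAT * R + ∑ i, (max (f i 0) 0 + M * R) + (CA * R + ‖b‖),
    fun x lam nu hR => ?_⟩
  obtain ⟨hx, hlam, hnu⟩ := norm_le_norm_l2Triple x lam nu
  have hxB : x ∈ Metric.closedBall 0 R := mem_closedBall_zero_iff.mpr (hx.trans hR)
  obtain ⟨hg0x, hgx⟩ := hM x hxB
  have hM0 : 0 ≤ M := (norm_nonneg _).trans hg0x
  have hGx : ‖g0 x + (∑ i, lam i • g i x) + mulVecE Aᵀ nu‖ ≤ M + m * (R * M) + CAT * R := by
    have hsum : ‖∑ i, lam i • g i x‖ ≤ m * (R * M) := by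
      calc ‖∑ i, lam i • g i x‖ ≤ ∑ i, ‖lam i • g i x‖ := norm_sum_le _ _
        _ ≤ ∑ _i : Fin m, R * M := Finset.sum_le_sum fun i _ => (norm_smul_le _ _).trans <|
          mul_le_mul ((PiLp.norm_apply_le lam i).trans (hlam.trans hR)) (hgx i) (norm_nonneg _)
            ((norm_nonneg _).trans (hlam.trans hR))
        _ = m * (R * M) := by simp
    have hAT := (norm_mulVecE_le Aᵀ nu).trans
      (mul_le_mul_of_nonneg_left (hnu.trans hR) (norm_nonneg _))
    linarith [norm_add₃_le (a := g0 x) (b := ∑ i, lam i • g i x) (c := mulVecE Aᵀ nu)]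
  have hF : ‖Fplus f x‖ ≤ ∑ i, (max (f i 0) 0 + M * R) := by
    refine (EuclideanSpace.norm_le_sum_norm _).trans (Finset.sum_le_sum fun i _ => ?_)
    have hsub := hg i x 0
    rw [zero_sub, inner_neg_right] at hsub
    have hcs := (real_inner_le_norm (g i x) x).trans
      (mul_le_mul (hgx i) (hx.trans hR) (norm_nonneg _) hM0)
    rw [Fplus_apply, Real.norm_of_nonneg (le_max_right _ _)]
    linarith
  have hAx : ‖mulVecE A x - b‖ ≤ CA * R + ‖b‖ := by
    have := (norm_mulVecE_le A x).trans (mul_le_mul_of_nonneg_left (hx.trans hR) (norm_nonneg _))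
    linarith [norm_sub_le (mulVecE A x) b]
  calc ‖lagGrad g0 g f A b x lam nu‖
      ≤ ‖g0 x + (∑ i, lam i • g i x) + mulVecE Aᵀ nu‖ + ‖-Fplus f x‖ + ‖-(mulVecE A x - b)‖ :=
        norm_l2Triple_le _ _ _
    _ ≤ _ := by rw [norm_neg, norm_neg]; linarith

end

theorem dsg_gradient_bound_general
    (n m l : ℕ)
    (f0 : EuclideanSpace ℝ (Fin n) → ℝ)
    (f : Fin m → EuclideanSpace ℝ (Fin n) → ℝ)
    (A : Matrix (Fin l) (Fin n) ℝ) (b : EuclideanSpace ℝ (Fin l))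
    (pstar : ℝ)
    (xstar : EuclideanSpace ℝ (Fin n))
    (lamstar : EuclideanSpace ℝ (Fin m)) (nustar : EuclideanSpace ℝ (Fin l))
    -- saddle-point assumption
    (hsaddle1 : ∀ (lam : EuclideanSpace ℝ (Fin m)) (nu : EuclideanSpace ℝ (Fin l)),
      (∀ i, 0 ≤ lam i) → Lag f0 f A b xstar lam nu ≤ pstar)
    (hsaddle2 : ∀ x, pstar ≤ Lag f0 f A b x lamstar nustar)
    -- fixed subgradient selections g₀(x) ∈ ∂f₀(x), gᵢ(x) ∈ ∂Fᵢ(x)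
    (g0 : EuclideanSpace ℝ (Fin n) → EuclideanSpace ℝ (Fin n))
    (hg0 : ∀ x y, ⟪g0 x, y - x⟫ ≤ f0 y - f0 x)
    (g : Fin m → EuclideanSpace ℝ (Fin n) → EuclideanSpace ℝ (Fin n))
    (hg : ∀ i x y, ⟪g i x, y - x⟫ ≤ max (f i y) 0 - max (f i x) 0)
    -- the DSG iterates z⁽ᵏ⁾ = (x⁽ᵏ⁾, λ⁽ᵏ⁾, ν⁽ᵏ⁾)
    (xk : ℕ → EuclideanSpace ℝ (Fin n))
    (lamk : ℕ → EuclideanSpace ℝ (Fin m))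
    (nuk : ℕ → EuclideanSpace ℝ (Fin l))
    (hlam0 : ∀ i, 0 ≤ lamk 0 i)
    -- G(z⁽ᵏ⁾): primal component Gx k and total Euclidean norm nG k
    (Gx : ℕ → EuclideanSpace ℝ (Fin n))
    (hGx : ∀ k, Gx k
      = g0 (xk k) + (∑ i, lamk k i • g i (xk k)) + mulVecE Aᵀ (nuk k))
    (nG : ℕ → ℝ)
    (hnG : ∀ k, nG k = Real.sqrt (‖Gx k‖ ^ 2 + ‖Fplus f (xk k)‖ ^ 2
      + ‖mulVecE A (xk k) - b‖ ^ 2))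
    -- the averaging sequences s⁽ᵏ⁾ and weights β
    (sx : ℕ → EuclideanSpace ℝ (Fin n))
    (slam : ℕ → EuclideanSpace ℝ (Fin m))
    (snu : ℕ → EuclideanSpace ℝ (Fin l))
    (hs0 : sx 0 = 0 ∧ slam 0 = 0 ∧ snu 0 = 0)
    (hsx : ∀ k, sx (k + 1) = sx k + (nG k)⁻¹ • Gx k)
    (hslam : ∀ k, slam (k + 1) = slam k + (nG k)⁻¹ • (-(Fplus f (xk k))))
    (hsnu : ∀ k, snu (k + 1) = snu k + (nG k)⁻¹ • (-(mulVecE A (xk k) - b)))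
    (β : ℕ → ℝ) (hβ0 : β 0 = 1) (hβ : ∀ k, β (k + 1) = β k + 1 / β k)
    (hxk : ∀ k, xk (k + 1) = xk 0 - (β k)⁻¹ • sx (k + 1))
    (hlamk : ∀ k, lamk (k + 1) = lamk 0 - (β k)⁻¹ • slam (k + 1))
    (hnuk : ∀ k, nuk (k + 1) = nuk 0 - (β k)⁻¹ • snu (k + 1))
    -- the chosen subgradient selections are bounded in norm on compact sets
    (hbdd : ∀ B : Set (EuclideanSpace ℝ (Fin n)), IsCompact B →
      ∃ M : ℝ, ∀ x ∈ B, ‖g0 x‖ ≤ M ∧ ∀ i, ‖g i x‖ ≤ M) :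
    ∃ C : ℝ, 0 < C ∧ ∀ k : ℕ, nG k ≤ C := by
  set z := fun k => l2Triple (xk k) (lamk k) (nuk k)
  set zstar := l2Triple xstar lamstar nustar
  set G := fun k => lagGrad g0 g f A b (xk k) (lamk k) (nuk k)
  have hG k : l2Triple (Gx k) (-Fplus f (xk k)) (-(mulVecE A (xk k) - b)) = G k := by
    rw [hGx]; rfl
  have hnG_norm k : nG k = ‖G k‖ := by rw [hnG, ← hG, norm_l2Triple, norm_neg, norm_neg]
  have hinv_nonneg k : 0 ≤ (nG k)⁻¹ := inv_nonneg.mpr (hnG_norm k ▸ norm_nonneg _)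
  have hβ_nonneg k : 0 ≤ β k := zero_le_one.trans (one_le_of_eq_add_one_div hβ0.ge hβ k)
  have hlam : ∀ k i, 0 ≤ lamk k i :=
    nonneg_of_dualAveraging hlam0 hs0.2.1 hslam hinv_nonneg (fun k i => le_max_right _ _)
      hβ_nonneg hlamk
  have hmono k : 0 ≤ ⟪(nG k)⁻¹ • G k, z k - zstar⟫ := by
    rw [real_inner_smul_left]
    refine mul_nonneg (hinv_nonneg k) ?_
    linarith [lag_sub_lag_le_inner_lagGrad (A := A) (b := b) hg0 hg (xk k) _ (nuk k) (hlam k)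
      xstar lamstar nustar, hsaddle1 _ (nuk k) (hlam k), hsaddle2 (xk k)]
  have hiter := norm_sub_le_of_dualAveraging zstar (z := z)
    (s := fun k => l2Triple (sx k) (slam k) (snu k)) hβ0.ge hβ
    (by rw [hs0.1, hs0.2.1, hs0.2.2, l2Triple_zero])
    (fun k => by rw [hsx, hslam, hsnu, l2Triple_add, l2Triple_smul, hG])
    (fun k => by simp only [z]; rw [hxk, hlamk, hnuk, l2Triple_sub, l2Triple_smul])
    (fun k => by rw [norm_smul, norm_inv, hnG_norm, norm_norm]; exact inv_mul_le_one) hmono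
  obtain ⟨C, hC⟩ :=
    exists_norm_lagGrad_le (A := A) (b := b) hg hbdd (‖zstar‖ + ‖z 0 - zstar‖ + 1)
  refine ⟨max C 1, by positivity, fun k => ?_⟩
  rw [hnG_norm]
  refine (hC _ _ _ ?_).trans (le_max_left _ _)
  linarith [norm_le_norm_add_norm_sub' (z k) zstar, hiter k]

/-- DSG: the subgradients `G(z⁽ᵏ⁾)` are uniformly bounded in norm. -/
theorem dsg_gradient_bound
    (n m l : ℕ)
    (f0 : EuclideanSpace ℝ (Fin n) → ℝ)
    (f : Fin m → EuclideanSpace ℝ (Fin n) → ℝ)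
    (hf0 : ConvexOn ℝ Set.univ f0)
    (hf : ∀ i, ConvexOn ℝ Set.univ (f i))
    (A : Matrix (Fin l) (Fin n) ℝ) (b : EuclideanSpace ℝ (Fin l))
    (pstar : ℝ)
    (xstar : EuclideanSpace ℝ (Fin n))
    (lamstar : EuclideanSpace ℝ (Fin m)) (nustar : EuclideanSpace ℝ (Fin l))
    -- x* is primal optimal with value p*
    (hxfeas : ∀ i, f i xstar ≤ 0) (hxeq : mulVecE A xstar = b)
    (hxval : f0 xstar = pstar)
    -- saddle-point assumption
    (hlamstar : ∀ i, 0 ≤ lamstar i)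
    (hsaddle_eq : Lag f0 f A b xstar lamstar nustar = pstar)
    (hsaddle1 : ∀ (lam : EuclideanSpace ℝ (Fin m)) (nu : EuclideanSpace ℝ (Fin l)),
      (∀ i, 0 ≤ lam i) → Lag f0 f A b xstar lam nu ≤ pstar)
    (hsaddle2 : ∀ x, pstar ≤ Lag f0 f A b x lamstar nustar)
    -- fixed subgradient selections g₀(x) ∈ ∂f₀(x), gᵢ(x) ∈ ∂Fᵢ(x)
    (g0 : EuclideanSpace ℝ (Fin n) → EuclideanSpace ℝ (Fin n))
    (hg0 : ∀ x y, ⟪g0 x, y - x⟫ ≤ f0 y - f0 x)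
    (g : Fin m → EuclideanSpace ℝ (Fin n) → EuclideanSpace ℝ (Fin n))
    (hg : ∀ i x y, ⟪g i x, y - x⟫ ≤ max (f i y) 0 - max (f i x) 0)
    -- the DSG iterates z⁽ᵏ⁾ = (x⁽ᵏ⁾, λ⁽ᵏ⁾, ν⁽ᵏ⁾)
    (xk : ℕ → EuclideanSpace ℝ (Fin n))
    (lamk : ℕ → EuclideanSpace ℝ (Fin m))
    (nuk : ℕ → EuclideanSpace ℝ (Fin l))
    (hlam0 : ∀ i, 0 ≤ lamk 0 i)
    -- G(z⁽ᵏ⁾): primal component Gx k and total Euclidean norm nG k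
    (Gx : ℕ → EuclideanSpace ℝ (Fin n))
    (hGx : ∀ k, Gx k
      = g0 (xk k) + (∑ i, lamk k i • g i (xk k)) + mulVecE Aᵀ (nuk k))
    (nG : ℕ → ℝ)
    (hnG : ∀ k, nG k = Real.sqrt (‖Gx k‖ ^ 2 + ‖Fplus f (xk k)‖ ^ 2
      + ‖mulVecE A (xk k) - b‖ ^ 2))
    -- G(z⁽ᵏ⁾) ≠ 0
    (hGne : ∀ k, ¬ (Gx k = 0 ∧ Fplus f (xk k) = 0 ∧ mulVecE A (xk k) - b = 0))
    -- the averaging sequences s⁽ᵏ⁾ and weights β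
    (sx : ℕ → EuclideanSpace ℝ (Fin n))
    (slam : ℕ → EuclideanSpace ℝ (Fin m))
    (snu : ℕ → EuclideanSpace ℝ (Fin l))
    (hs0 : sx 0 = 0 ∧ slam 0 = 0 ∧ snu 0 = 0)
    (hsx : ∀ k, sx (k + 1) = sx k + (nG k)⁻¹ • Gx k)
    (hslam : ∀ k, slam (k + 1) = slam k + (nG k)⁻¹ • (-(Fplus f (xk k))))
    (hsnu : ∀ k, snu (k + 1) = snu k + (nG k)⁻¹ • (-(mulVecE A (xk k) - b)))
    (β : ℕ → ℝ) (hβ0 : β 0 = 1) (hβ : ∀ k, β (k + 1) = β k + 1 / β k)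
    (hxk : ∀ k, xk (k + 1) = xk 0 - (β k)⁻¹ • sx (k + 1))
    (hlamk : ∀ k, lamk (k + 1) = lamk 0 - (β k)⁻¹ • slam (k + 1))
    (hnuk : ∀ k, nuk (k + 1) = nuk 0 - (β k)⁻¹ • snu (k + 1))
    -- the chosen subgradient selections are bounded in norm on compact sets
    (hbdd : ∀ B : Set (EuclideanSpace ℝ (Fin n)), IsCompact B →
      ∃ M : ℝ, ∀ x ∈ B, ‖g0 x‖ ≤ M ∧ ∀ i, ‖g i x‖ ≤ M) :
    ∃ C : ℝ, 0 < C ∧ ∀ k : ℕ, nG k ≤ C :=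
  dsg_gradient_bound_general n m l f0 f A b pstar xstar lamstar nustar hsaddle1 hsaddle2 g0 hg0 g hg
    xk lamk nuk hlam0 Gx hGx nG hnG sx slam snu hs0 hsx hslam hsnu β hβ0 hβ hxk hlamk hnuk hbdd
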